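/- arXiv:1407.1288 — 2 statements merged into one kernel-verified Lean document; each statement's English description precedes it below -/
import Mathlib

section
/- Let m-bar = x_{i_0} m and n-bar = x_{i_0} n be two graded monomials starting with the same variable, where m and n are the monomials obtained by deleting the first variable. If there exist generic matrices A_1,...,A_q such that m-bar(A_1,...,A_q) and n-bar(A_1,...,A_q) have the same nonzero entry in the same position, then m(A_1,...,A_q) and n(A_1,...,A_q) also have the same nonzero entry in the same position. -/
/-- The generic matrix `A_i^{(h)}` over `Ω = K[Y]`: its `(k, l)` entry is `y^k_{h,i}` if
`g l = g k * h`, and `0` otherwise. -/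
noncomputable def genMat {K : Type*} [Field K] {G : Type*} [Group G] [DecidableEq G] {n : ℕ}
    (g : Fin n → G) (h : G) (i : ℕ) :
    Matrix (Fin n) (Fin n) (MvPolynomial (G × ℕ × Fin n) K) :=
  Matrix.of fun k l => if g k * h = g l then MvPolynomial.X (h, i, k) else 0

/-- Evaluation of the graded monomial encoded by the word `w` (letters `(h, i)` standing for
the `i`-th variable of degree `h`) at the generic matrices. -/
noncomputable def evalWord (K : Type*) [Field K] {G : Type*} [Group G] [DecidableEq G] {n : ℕ}
    (g : Fin n → G) (w : List (G × ℕ)) :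
    Matrix (Fin n) (Fin n) (MvPolynomial (G × ℕ × Fin n) K) :=
  (w.map fun p => genMat (K := K) g p.1 p.2).prod

open MvPolynomial

section GenericMatrix

variable {K : Type*} [Field K] {G : Type*} [Group G] [DecidableEq G] {n : ℕ} {g : Fin n → G}

theorem evalWord_cons (p : G × ℕ) (w : List (G × ℕ)) :
    evalWord K g (p :: w) = genMat g p.1 p.2 * evalWord K g w := by
  simp [evalWord]

theorem genMat_mul_apply_of_mul_eq (hg : Function.Injective g) {h : G} (i : ℕ) {k j : Fin n}
    (hkj : g k * h = g j) (M : Matrix (Fin n) (Fin n) (MvPolynomial (G × ℕ × Fin n) K))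
    (l : Fin n) : (genMat (K := K) g h i * M) k l = X (h, i, k) * M j l := by
  rw [Matrix.mul_apply, Finset.sum_eq_single j]
  · simp [genMat, hkj]
  · intro j' _ hj'
    have hne : g k * h ≠ g j' := fun h' => hj' (hg (h'.symm.trans hkj))
    simp [genMat, hne]
  · simp

theorem exists_mul_eq_of_genMat_mul_apply_ne_zero {h : G} {i : ℕ} {k l : Fin n}
    {M : Matrix (Fin n) (Fin n) (MvPolynomial (G × ℕ × Fin n) K)}
    (hM : (genMat (K := K) g h i * M) k l ≠ 0) : ∃ j, g k * h = g j := by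
  by_contra! hrow
  rw [Matrix.mul_apply] at hM
  refine hM (Finset.sum_eq_zero fun j _ => ?_)
  simp [genMat, hrow j]

end GenericMatrix

theorem evalWord_tail_same_entry_general
    (K : Type*) [Field K] {G : Type*} [Group G] [DecidableEq G] {n : ℕ}
    (g : Fin n → G) (hg : Function.Injective g)
    (p : G × ℕ) (m nn : List (G × ℕ))
    (hexists : ∃ k l : Fin n,
      evalWord K g (p :: m) k l = evalWord K g (p :: nn) k l ∧
      evalWord K g (p :: m) k l ≠ 0) :
    ∃ k l : Fin n,
      evalWord K g m k l = evalWord K g nn k l ∧ evalWord K g m k l ≠ 0 := by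
  obtain ⟨k, l, heq, hne⟩ := hexists
  rw [evalWord_cons, evalWord_cons] at heq
  rw [evalWord_cons] at hne
  obtain ⟨j, hkj⟩ := exists_mul_eq_of_genMat_mul_apply_ne_zero hne
  simp only [genMat_mul_apply_of_mul_eq hg p.2 hkj] at heq hne
  exact ⟨j, l, mul_left_cancel₀ (X_ne_zero _) heq, right_ne_zero_of_mul hne⟩

/-- if two graded monomials starting with the same variable have generic-matrix
evaluations sharing the same nonzero entry in the same position, then the monomials obtained
by deleting the first variable also share a nonzero entry in a common position. -/
theorem evalWord_tail_same_entry
    (K : Type*) [Field K] [Infinite K] {G : Type*} [Group G] [DecidableEq G] {n : ℕ}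
    (g : Fin n → G) (hg : Function.Injective g)
    (p : G × ℕ) (m nn : List (G × ℕ))
    (hexists : ∃ k l : Fin n,
      evalWord K g (p :: m) k l = evalWord K g (p :: nn) k l ∧
      evalWord K g (p :: m) k l ≠ 0) :
    ∃ k l : Fin n,
      evalWord K g m k l = evalWord K g nn k l ∧ evalWord K g m k l ≠ 0 :=
  evalWord_tail_same_entry_general K g hg p m nn hexists
end

section
/- Let K be an infinite field and let M_n(K) carry the elementary G-grading induced by pairwise distinct (g_1,...,g_n). The relatively free algebra K<X>/T_G(M_n(K)) is isomorphic, as a G-graded algebra, to the subalgebra F of M_n(K[Y]) generated by the generic matrices A_i^{(h)} (h in G, i in N), via the map sending the class of the variable x (the i-th variable of degree h) to A_i^{(h)}. In particular T_G(F) = T_G(M_n(K)). -/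
/-! Since `g` is injective, the support of `A_i^{(h)}` meets each row at most once and every entry
there is a distinct variable. Hence any substitution of homogeneous matrices over a commutative
`K`-algebra `Ω` is the image of the generic substitution under a specialization `K[Y] → Ω`, so
whatever vanishes on the generic matrices vanishes on every homogeneous substitution, in `Mₙ(K)`
and in `F` alike. Conversely, if `f ∈ T_G(Mₙ(K))`, the entries of `f(A)` are polynomials whose
value at each point of `K^Y` is an entry of a homogeneous evaluation of `f` in `Mₙ(K)`; they vanish
everywhere, hence are zero as `K` is infinite. -/

/-- The free `G`-graded associative algebra `K⟨X⟩` on variables `x_{h,i}`. -/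
abbrev FreeGr (K : Type*) (G : Type*) [Field K] := MonoidAlgebra K (FreeMonoid (G × ℕ))

/-- Homogeneous component of degree `h` of the elementary `G`-grading of `Mₙ(K)`. -/
def elemComp (K : Type*) [Field K] {G : Type*} [Group G] {n : ℕ} (g : Fin n → G) (h : G) :
    Submodule K (Matrix (Fin n) (Fin n) K) :=
  Submodule.span K {M | ∃ i j : Fin n, (g i)⁻¹ * g j = h ∧ M = Matrix.single i j 1}

/-- The set of graded polynomial identities of `Mₙ(K)`. -/
def TGIdeal (K : Type*) [Field K] {G : Type*} [Group G] {n : ℕ} (g : Fin n → G) :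
    Set (FreeGr K G) :=
  {f | ∀ v : G × ℕ → Matrix (Fin n) (Fin n) K, (∀ p : G × ℕ, v p ∈ elemComp K g p.1) →
    (MonoidAlgebra.lift K (Matrix (Fin n) (Fin n) K) (FreeMonoid (G × ℕ))
      (FreeMonoid.lift v)) f = 0}

namespace FreeMonoidAlgebra

variable {R X A B : Type*} [CommSemiring R] [Semiring A] [Algebra R A] [Semiring B] [Algebra R B]

variable (R) in
noncomputable abbrev lift (v : X → A) : MonoidAlgebra R (FreeMonoid X) →ₐ[R] A :=
  MonoidAlgebra.lift R A (FreeMonoid X) (FreeMonoid.lift v)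

theorem lift_of (v : X → A) (x : X) :
    lift R v (MonoidAlgebra.of R (FreeMonoid X) (FreeMonoid.of x)) = v x := by
  rw [MonoidAlgebra.lift_of, FreeMonoid.lift_eval_of]

theorem comp_lift (ψ : A →ₐ[R] B) (v : X → A) : ψ.comp (lift R v) = lift R fun x => ψ (v x) :=
  MonoidAlgebra.algHom_ext' (FreeMonoid.hom_eq fun x => by simp) (Subsingleton.elim _ _)

theorem adjoin_range_of :
    Algebra.adjoin R (Set.range fun x : X => MonoidAlgebra.of R (FreeMonoid X) (FreeMonoid.of x))
      = ⊤ := by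
  rw [eq_top_iff]
  rintro f -
  induction f using MonoidAlgebra.induction_on with
  | of m =>
    induction m using FreeMonoid.recOn with
    | one => rw [map_one]; exact Subalgebra.one_mem _
    | of_mul x xs ih =>
      rw [map_mul]
      exact Subalgebra.mul_mem _ (Algebra.subset_adjoin ⟨x, rfl⟩) ih
  | add f g hf hg => exact Subalgebra.add_mem _ hf hg
  | smul r f hf => exact Subalgebra.smul_mem _ hf r

theorem range_lift (v : X → A) : (lift R v).range = Algebra.adjoin R (Set.range v) := by
  rw [← Algebra.map_top, ← adjoin_range_of, AlgHom.map_adjoin, ← Set.range_comp]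
  exact congrArg _ (congrArg _ (funext (lift_of v)))

end FreeMonoidAlgebra

section ElementaryGrading

variable {G : Type*} [Group G]

def IsElemHomogeneous {ι R : Type*} [Zero R] (g : ι → G) (h : G) (M : Matrix ι ι R) : Prop :=
  ∀ k l, g k * h ≠ g l → M k l = 0

theorem IsElemHomogeneous.map {ι R S : Type*} [Zero R] [Zero S] {g : ι → G} {h : G}
    {M : Matrix ι ι R} (hM : IsElemHomogeneous g h M) {φ : R → S} (hφ : φ 0 = 0) :
    IsElemHomogeneous g h (M.map φ) := fun k l hkl => by
  rw [Matrix.map_apply, hM k l hkl, hφ]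

variable {K : Type*} [Field K] {n : ℕ} (g : Fin n → G)

theorem mem_elemComp_iff {h : G} {M : Matrix (Fin n) (Fin n) K} :
    M ∈ elemComp K g h ↔ IsElemHomogeneous g h M := by
  constructor
  · intro hM
    induction hM using Submodule.span_induction with
    | mem x hx =>
      obtain ⟨i, j, hij, rfl⟩ := hx
      intro k l hkl
      have : ¬(i = k ∧ j = l) := by
        rintro ⟨rfl, rfl⟩
        exact hkl (by rw [← hij]; group)
      simp [Matrix.single, this]
    | zero => intro k l _; rfl
    | add x y _ _ hx hy => intro k l hkl; simp [hx k l hkl, hy k l hkl]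
    | smul a x _ hx => intro k l hkl; simp [hx k l hkl]
  · intro hM
    rw [Matrix.matrix_eq_sum_single M]
    refine Submodule.sum_mem _ fun k _ => Submodule.sum_mem _ fun l _ => ?_
    by_cases hkl : g k * h = g l
    · rw [← mul_one (M k l), ← smul_eq_mul, ← Matrix.smul_single]
      refine Submodule.smul_mem _ _ (Submodule.subset_span ⟨k, l, ?_, rfl⟩)
      rw [inv_mul_eq_iff_eq_mul, hkl]
    · rw [hM k l hkl, Matrix.single_zero]
      exact Submodule.zero_mem _

variable [DecidableEq G]

theorem isElemHomogeneous_genMat (h : G) (i : ℕ) :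
    IsElemHomogeneous g h (genMat (K := K) g h i) := fun k l hkl => by
  simp [genMat, hkl]

end ElementaryGrading

section GenericMatrices

variable {G : Type*} [Group G] [DecidableEq G] {K : Type*} [Field K] {n : ℕ} {g : Fin n → G}

theorem exists_mapMatrix_genMat_eq (hg : Function.Injective g) {Ω : Type*} [CommSemiring Ω]
    [Algebra K Ω] {v : G × ℕ → Matrix (Fin n) (Fin n) Ω}
    (hv : ∀ p, IsElemHomogeneous g p.1 (v p)) :
    ∃ φ : MvPolynomial (G × ℕ × Fin n) K →ₐ[K] Ω,
      ∀ p : G × ℕ, φ.mapMatrix (genMat g p.1 p.2) = v p := by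
  -- `y^k_{h,i}` goes to the `(k, s(k,h))` entry of `v (h, i)`; the sum has at most one term
  refine ⟨MvPolynomial.aeval fun q =>
      ∑ l, if g q.2.2 * q.1 = g l then v (q.1, q.2.1) q.2.2 l else 0,
    fun p => Matrix.ext fun k l => ?_⟩
  by_cases hkl : g k * p.1 = g l
  · simp only [AlgHom.mapMatrix_apply, Matrix.map_apply, genMat, Matrix.of_apply, if_pos hkl,
      MvPolynomial.aeval_X]
    rw [Finset.sum_eq_single l (fun l' _ hl' => if_neg fun h => hl' (hg (h.symm.trans hkl)))
      (absurd (Finset.mem_univ l)), if_pos hkl]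
  · simp [genMat, hkl, hv p k l hkl]

theorem lift_eq_zero_of_lift_genMat_eq_zero (hg : Function.Injective g) {Ω : Type*}
    [CommSemiring Ω] [Algebra K Ω] {v : G × ℕ → Matrix (Fin n) (Fin n) Ω}
    (hv : ∀ p, IsElemHomogeneous g p.1 (v p)) {f : FreeGr K G}
    (hf : FreeMonoidAlgebra.lift K (fun p : G × ℕ => genMat (K := K) g p.1 p.2) f = 0) :
    FreeMonoidAlgebra.lift K v f = 0 := by
  obtain ⟨φ, hφ⟩ := exists_mapMatrix_genMat_eq (K := K) hg hv
  rw [← funext hφ, ← FreeMonoidAlgebra.comp_lift, AlgHom.comp_apply, hf, map_zero]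

theorem lift_genMat_eq_zero_of_mem_TGIdeal [Infinite K] {f : FreeGr K G}
    (hf : f ∈ TGIdeal K g) :
    FreeMonoidAlgebra.lift K (fun p : G × ℕ => genMat (K := K) g p.1 p.2) f = 0 := by
  refine Matrix.ext fun k l => MvPolynomial.funext fun x => ?_
  have hx : (MvPolynomial.aeval x).mapMatrix
      (FreeMonoidAlgebra.lift K (fun p : G × ℕ => genMat (K := K) g p.1 p.2) f) = 0 := by
    rw [← AlgHom.comp_apply, FreeMonoidAlgebra.comp_lift]
    exact hf _ fun p => (mem_elemComp_iff g).2
      ((isElemHomogeneous_genMat g p.1 p.2).map (map_zero _))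
  simpa using congr_fun₂ hx k l

theorem lift_genMat_eq_zero_iff [Infinite K] (hg : Function.Injective g) {f : FreeGr K G} :
    FreeMonoidAlgebra.lift K (fun p : G × ℕ => genMat (K := K) g p.1 p.2) f = 0 ↔
      f ∈ TGIdeal K g :=
  ⟨fun hf _ hv =>
      lift_eq_zero_of_lift_genMat_eq_zero hg (fun p => (mem_elemComp_iff g).1 (hv p)) hf,
    lift_genMat_eq_zero_of_mem_TGIdeal⟩

end GenericMatrices

/-- the algebra homomorphism `Φ : K⟨X⟩ → Mₙ(Ω)` sending the variable `x_{h,i}`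
to the generic matrix `A_i^{(h)}` has kernel exactly `T_G(Mₙ(K))` and range the algebra `F`
generated by the generic matrices; hence `K⟨X⟩/T_G(Mₙ(K)) ≅ F`. In particular the graded
identities of `F` (substitutions by homogeneous elements of `F`) coincide with those of
`Mₙ(K)`. -/
theorem relatively_free_algebra_iso_generic_matrices
    (K : Type*) [Field K] [Infinite K] {G : Type*} [Group G] [DecidableEq G] {n : ℕ}
    (g : Fin n → G) (hg : Function.Injective g) :
    ∃ Φ : FreeGr K G →ₐ[K] Matrix (Fin n) (Fin n) (MvPolynomial (G × ℕ × Fin n) K),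
      (∀ p : G × ℕ,
        Φ (MonoidAlgebra.of K (FreeMonoid (G × ℕ)) (FreeMonoid.of p)) =
          genMat (K := K) g p.1 p.2) ∧
      (∀ f : FreeGr K G, Φ f = 0 ↔ f ∈ TGIdeal K g) ∧
      Φ.range =
        Algebra.adjoin K (Set.range fun p : G × ℕ => genMat (K := K) g p.1 p.2) ∧
      {f : FreeGr K G |
        ∀ v : G × ℕ → Matrix (Fin n) (Fin n) (MvPolynomial (G × ℕ × Fin n) K),
          (∀ p : G × ℕ,
            v p ∈ Algebra.adjoin K (Set.range fun p : G × ℕ => genMat (K := K) g p.1 p.2) ∧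
            ∀ k l : Fin n, g k * p.1 ≠ g l → v p k l = 0) →
          (MonoidAlgebra.lift K
            (Matrix (Fin n) (Fin n) (MvPolynomial (G × ℕ × Fin n) K)) (FreeMonoid (G × ℕ))
            (FreeMonoid.lift v)) f = 0} = TGIdeal K g := by
  refine ⟨FreeMonoidAlgebra.lift K fun p : G × ℕ => genMat (K := K) g p.1 p.2,
    FreeMonoidAlgebra.lift_of _, fun f => lift_genMat_eq_zero_iff hg,
    FreeMonoidAlgebra.range_lift _, ?_⟩
  ext f
  exact ⟨fun hf => (lift_genMat_eq_zero_iff hg).1 <|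
      hf _ fun p => ⟨Algebra.subset_adjoin ⟨p, rfl⟩, isElemHomogeneous_genMat g p.1 p.2⟩,
    fun hf _ hv => lift_eq_zero_of_lift_genMat_eq_zero hg (fun p => (hv p).2)
      ((lift_genMat_eq_zero_iff hg).2 hf)⟩
end
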